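/- Define P₁(μ, B) = (1/3)·(1 + e^{−7μ}·((3/4)e^{−B}e^{−4μ} + (1 − (1/2)e^{−B})e^{−2μ} + (1 − (1/4)e^{−B}))), P₂(μ, B) = (1/3)·(1 − e^{−7μ}·((3/4)e^{−B}e^{−4μ} − (1 − (1/2)e^{−B})e^{−2μ} − (1 + (5/4)e^{−B}))), and P₃(μ, B) = (1/3)·(1 + e^{−7μ}·((3/8)e^{−B}e^{−4μ} − ((1/2) − (1/4)e^{−B})e^{−2μ} + ((1/2) + (11/8)e^{−B}))). Then for every real μ > 0: P₁(μ, 0) = (1/3)·(1 + e^{−7μ}·(3/4 + (3/4)e^{−4μ} + (1/2)e^{−2μ})) > 1/3, P₂(μ, 0) = (1/3)·(1 + e^{−7μ}·(9/4 − (3/4)e^{−4μ} + (1/2)e^{−2μ})) > 1/3, and P₃(μ, 0) = (1/3)·(1 + e^{−7μ}·(15/8 + (3/8)e^{−4μ} − (1/4)e^{−2μ})) > 1/3. (This corresponds to the limit t₃ − t₂ → 0: in contrast to lineage sorting and site substitution models, the probability of the matching triplet topology stays strictly above 1/3 as the interior branch length shrinks to zero.) -/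
import Mathlib


/-- Match probability for a pectinate four-taxon species tree of type `(ab;c;*)`. -/
noncomputable def P₁ (μ B : ℝ) : ℝ :=
  (1/3) * (1 + Real.exp (-7 * μ) * ((3/4) * Real.exp (-B) * Real.exp (-4 * μ)
      + (1 - (1/2) * Real.exp (-B)) * Real.exp (-2 * μ)
      + (1 - (1/4) * Real.exp (-B))))

/-- Match probability for a pectinate four-taxon species tree of type `(ab;*;c)`. -/
noncomputable def P₂ (μ B : ℝ) : ℝ :=
  (1/3) * (1 - Real.exp (-7 * μ) * ((3/4) * Real.exp (-B) * Real.exp (-4 * μ)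
      - (1 - (1/2) * Real.exp (-B)) * Real.exp (-2 * μ)
      - (1 + (5/4) * Real.exp (-B))))

/-- Match probability for a pectinate four-taxon species tree of type
`(a*;b;c)` or `(b*;a;c)`. -/
noncomputable def P₃ (μ B : ℝ) : ℝ :=
  (1/3) * (1 + Real.exp (-7 * μ) * ((3/8) * Real.exp (-B) * Real.exp (-4 * μ)
      - ((1/2) - (1/4) * Real.exp (-B)) * Real.exp (-2 * μ)
      + ((1/2) + (11/8) * Real.exp (-B))))

theorem limit_interior_branch_to_zero (μ : ℝ) (hμ : 0 < μ) :
    (P₁ μ 0 = (1/3) * (1 + Real.exp (-7 * μ) * (3/4 + (3/4) * Real.exp (-4 * μ)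
        + (1/2) * Real.exp (-2 * μ))) ∧ P₁ μ 0 > 1/3) ∧
    (P₂ μ 0 = (1/3) * (1 + Real.exp (-7 * μ) * (9/4 - (3/4) * Real.exp (-4 * μ)
        + (1/2) * Real.exp (-2 * μ))) ∧ P₂ μ 0 > 1/3) ∧
    (P₃ μ 0 = (1/3) * (1 + Real.exp (-7 * μ) * (15/8 + (3/8) * Real.exp (-4 * μ)
        - (1/4) * Real.exp (-2 * μ))) ∧ P₃ μ 0 > 1/3) := by
  have he : Real.exp (-0 : ℝ) = 1 := by norm_num
  have h0 : (0:ℝ) < Real.exp (-7 * μ) := Real.exp_pos _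
  have h4 : Real.exp (-4 * μ) < 1 := by
    apply Real.exp_lt_one_iff.mpr; nlinarith
  have h2 : Real.exp (-2 * μ) < 1 := by
    apply Real.exp_lt_one_iff.mpr; nlinarith
  have h4p : (0:ℝ) < Real.exp (-4 * μ) := Real.exp_pos _
  have h2p : (0:ℝ) < Real.exp (-2 * μ) := Real.exp_pos _
  refine ⟨⟨by simp [P₁, he]; ring, ?_⟩, ⟨by simp [P₂, he]; ring, ?_⟩, ⟨by simp [P₃, he]; ring, ?_⟩⟩
  · simp only [P₁, he]; nlinarith
  · simp only [P₂, he]; nlinarith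
  · simp only [P₃, he]; nlinarith
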